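/- For all n ≥ 1, u_r(n,1) = (-1)^{n-1} · (Π_{l=0}^{n-1}(l²+r)) · (Σ_{i=0}^{n-1} 1/(r+i²)), as an identity of rational numbers (with r ≥ 1, or interpreting the i=0 term via r > 0; equivalently u_r(n,1) = (-1)^{n-1} Σ_{i=0}^{n-1} Π_{l=0, l≠i}^{n-1}(l²+r)). -/

import Mathlib

/-- `centralu r n k` is the r-central factorial number with even indices of the first kind. -/
def centralu (r : ℕ) : ℕ → ℕ → ℤ
  | 0, 0 => 1
  | 0, _ + 1 => 0
  | n + 1, 0 => (-1) ^ (n + 1) * ∏ i ∈ Finset.range (n + 1), ((i : ℤ) ^ 2 + r)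
  | n + 1, k + 1 => centralu r n k - ((n : ℤ) ^ 2 + r) * centralu r n (k + 1)

/-! Up to the sign `(-1) ^ (n + 1)`, `u_r(n, 1)` is `S n = ∑ i < n, ∏ l < n, l ≠ i, (l ^ 2 + r)`:
appending the factor `n ^ 2 + r` gives `S (n + 1) = ∏ l < n, (l ^ 2 + r) + (n ^ 2 + r) * S n`,
which is the recurrence `u_r(n + 1, 1) = u_r(n, 0) - (n ^ 2 + r) u_r(n, 1)`. For `r ≥ 1` each
summand of `S n` is the full product divided by `i ^ 2 + r`. -/

open Finset

theorem sum_prod_range_erase_succ {R : Type*} [CommSemiring R] (f : ℕ → R) (n : ℕ) :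
    ∑ i ∈ range (n + 1), ∏ l ∈ (range (n + 1)).erase i, f l =
      ∏ l ∈ range n, f l + f n * ∑ i ∈ range n, ∏ l ∈ (range n).erase i, f l := by
  have hn : n ∉ range n := notMem_range_self
  rw [sum_range_succ, range_add_one, erase_insert hn, add_comm, mul_sum]
  congr 1
  refine sum_congr rfl fun i hi => ?_
  have hin : n ≠ i := (ne_of_mem_of_not_mem hi hn).symm
  rw [erase_insert_of_ne hin, prod_insert fun h => hn (mem_of_mem_erase h)]

theorem centralu_zero (r n : ℕ) :
    centralu r n 0 = (-1) ^ n * ∏ i ∈ range n, ((i : ℤ) ^ 2 + r) := by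
  cases n <;> simp [centralu]

theorem centralu_one_eq_sum_prod_erase (r n : ℕ) :
    centralu r n 1 =
      (-1) ^ (n + 1) * ∑ i ∈ range n, ∏ l ∈ (range n).erase i, ((l : ℤ) ^ 2 + r) := by
  induction n with
  | zero => simp [centralu]
  | succ n ih =>
    rw [centralu, centralu_zero, ih, sum_prod_range_erase_succ]
    ring

theorem centralu_one (r n : ℕ) (hr : 1 ≤ r) :
    (centralu r n 1 : ℚ) =
      (-1) ^ (n - 1) * (∏ l ∈ Finset.range n, ((l : ℚ) ^ 2 + r)) *
        ∑ i ∈ Finset.range n, 1 / ((r : ℚ) + (i : ℚ) ^ 2) := by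
  rcases n with _ | n
  · simp [centralu]
  have prod_erase_eq (i : ℕ) (hi : i ∈ range (n + 1)) :
      ∏ l ∈ (range (n + 1)).erase i, ((l : ℚ) ^ 2 + r) =
        (∏ l ∈ range (n + 1), ((l : ℚ) ^ 2 + r)) * (1 / ((r : ℚ) + (i : ℚ) ^ 2)) := by
    have hi_ne : (i : ℚ) ^ 2 + r ≠ 0 := by positivity
    rw [← mul_prod_erase _ _ hi, add_comm (r : ℚ)]
    field_simp
  rw [centralu_one_eq_sum_prod_erase]
  push_cast
  rw [sum_congr rfl prod_erase_eq, ← mul_sum]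
  ring
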